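/- arXiv:2602.12368 — 4 statements merged into one kernel-verified Lean document; each statement's English description precedes it below -/
import Mathlib

section
/- (Kazdan–Warner identity, rotationally symmetric case with first spherical harmonic F(θ) = cos θ.) Let K : [0,π] → ℝ be continuously differentiable and let u be a zonal solution of the Nirenberg equation with prescribed curvature K. Then ∫_0^π K'(θ)·sin²θ·e^{2u(θ)} dθ = 0. -/
open Real Set

/-- `u` (with first derivative `u'` and second derivative `u''`) is a zonal
solution of the Nirenberg equation with prescribed curvature `K`:
`u` is C² on `[0,π]` (its derivative on `[0,π]` is `u'`, whose derivative is
the continuous function `u''`), satisfies the Neumann conditions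
`u'(0) = u'(π) = 0`, and satisfies
`1 − u''(θ) − (cos θ / sin θ)·u'(θ) = K(θ)·e^{2u(θ)}` on `(0,π)`. -/
def IsZonalSolution (K u u' u'' : ℝ → ℝ) : Prop :=
  (∀ θ ∈ Icc (0 : ℝ) π, HasDerivWithinAt u (u' θ) (Icc (0 : ℝ) π) θ) ∧
  (∀ θ ∈ Icc (0 : ℝ) π, HasDerivWithinAt u' (u'' θ) (Icc (0 : ℝ) π) θ) ∧
  ContinuousOn u'' (Icc (0 : ℝ) π) ∧
  u' 0 = 0 ∧ u' π = 0 ∧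
  (∀ θ ∈ Ioo (0 : ℝ) π,
    1 - u'' θ - (Real.cos θ / Real.sin θ) * u' θ = K θ * Real.exp (2 * u θ))

/-- **Kazdan–Warner identity, rotationally symmetric case with `F(θ) = cos θ`.**
If `K : [0,π] → ℝ` is C¹ (with derivative `K'` on `[0,π]`, continuous) and `u`
is a zonal solution of the Nirenberg equation with prescribed curvature `K`,
then `∫₀^π K'(θ)·sin²θ·e^{2u(θ)} dθ = 0`. -/
theorem zonal_kazdan_warner
    (K K' u u' u'' : ℝ → ℝ)
    (hK : ∀ θ ∈ Icc (0 : ℝ) π, HasDerivWithinAt K (K' θ) (Icc (0 : ℝ) π) θ)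
    (hK' : ContinuousOn K' (Icc (0 : ℝ) π))
    (hu : IsZonalSolution K u u' u'') :
    ∫ θ in (0 : ℝ)..π, K' θ * Real.sin θ ^ 2 * Real.exp (2 * u θ) = 0 := by
  obtain ⟨hud, hu'd, hu''c, hu'0, hu'pi, heq⟩ := hu
  set G : ℝ → ℝ := fun θ => K θ * Real.sin θ ^ 2 * Real.exp (2 * u θ)
    + 2 * u' θ * Real.sin θ * Real.cos θ + (u' θ) ^ 2 * Real.sin θ ^ 2
    + Real.cos θ ^ 2 with hG
  have hKc : ContinuousOn K (Icc 0 π) := fun θ hθ => (hK θ hθ).continuousWithinAt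
  have huc : ContinuousOn u (Icc 0 π) := fun θ hθ => (hud θ hθ).continuousWithinAt
  have hu'c : ContinuousOn u' (Icc 0 π) := fun θ hθ => (hu'd θ hθ).continuousWithinAt
  have hEc : ContinuousOn (fun θ => Real.exp (2 * u θ)) (Icc 0 π) :=
    Real.continuous_exp.comp_continuousOn (continuousOn_const.mul huc)
  have hGc : ContinuousOn G (Icc 0 π) := by
    apply ContinuousOn.add
    apply ContinuousOn.add
    apply ContinuousOn.add
    · exact (hKc.mul (Real.continuous_sin.continuousOn.pow 2)).mul hEc
    · exact (((continuousOn_const.mul hu'c).mul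
        Real.continuous_sin.continuousOn).mul Real.continuous_cos.continuousOn)
    · exact (hu'c.pow 2).mul (Real.continuous_sin.continuousOn.pow 2)
    · exact Real.continuous_cos.continuousOn.pow 2
  have hderiv : ∀ θ ∈ Ioo (0 : ℝ) π,
      HasDerivAt G (K' θ * Real.sin θ ^ 2 * Real.exp (2 * u θ)) θ := by
    intro θ hθ
    have hmem : Icc (0 : ℝ) π ∈ nhds θ := Icc_mem_nhds hθ.1 hθ.2
    have hKθ := (hK θ (Ioo_subset_Icc_self hθ)).hasDerivAt hmem
    have huθ := (hud θ (Ioo_subset_Icc_self hθ)).hasDerivAt hmem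
    have hu'θ := (hu'd θ (Ioo_subset_Icc_self hθ)).hasDerivAt hmem
    have hs := Real.hasDerivAt_sin θ
    have hc := Real.hasDerivAt_cos θ
    have hE : HasDerivAt (fun x => Real.exp (2 * u x))
        (Real.exp (2 * u θ) * (2 * u' θ)) θ := by
      simpa using (huθ.const_mul 2).exp
    have hA := (hKθ.mul (hs.pow 2)).mul hE
    have hB := (((hu'θ.const_mul 2).mul hs).mul hc)
    have hC := (hu'θ.pow 2).mul (hs.pow 2)
    have hD := hc.pow 2
    have h := ((hA.add hB).add hC).add hD
    convert h using 1
    · rfl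
    · rfl
    · rfl
    simp only [Pi.mul_apply, Pi.pow_apply]
    have hsne : Real.sin θ ≠ 0 := ne_of_gt (Real.sin_pos_of_pos_of_lt_pi hθ.1 hθ.2)
    have he := heq θ hθ
    have hKE : K θ * Real.exp (2 * u θ) * Real.sin θ
        = (1 - u'' θ) * Real.sin θ - Real.cos θ * u' θ := by
      field_simp at he
      linarith [he]
    linear_combination (-(2 * Real.cos θ) - 2 * u' θ * Real.sin θ) * hKE
  have hint : IntervalIntegrable
      (fun θ => K' θ * Real.sin θ ^ 2 * Real.exp (2 * u θ)) MeasureTheory.volume 0 π := by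
    apply ContinuousOn.intervalIntegrable
    rw [uIcc_of_le Real.pi_pos.le]
    exact (hK'.mul (Real.continuous_sin.continuousOn.pow 2)).mul hEc
  have hFTC := intervalIntegral.integral_eq_sub_of_hasDeriv_right_of_le Real.pi_pos.le
    hGc (fun θ hθ => (hderiv θ hθ).hasDerivWithinAt) hint
  rw [hFTC]
  simp [hG, hu'0, hu'pi, Real.sin_pi, Real.cos_pi]
end

section
/- Let K : [0,π] → ℝ be continuously differentiable with K'(θ) < 0 for every θ ∈ (0,π) (i.e. K is strictly monotonically decreasing on (0,π)). Then there exists no zonal solution of the Nirenberg equation with prescribed curvature K. In particular, K(θ) = 2 + cos θ admits no zonal solution. -/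
open Real Set

lemma no_zonal_aux (K K' : ℝ → ℝ)
    (hK : ∀ θ ∈ Icc (0 : ℝ) π, HasDerivWithinAt K (K' θ) (Icc (0 : ℝ) π) θ)
    (hdec : ∀ θ ∈ Ioo (0 : ℝ) π, K' θ < 0) :
    ∀ u u' u'', ¬ IsZonalSolution K u u' u'' := by
  intro u u' u'' hsol
  obtain ⟨hu, hu', hu''c, h0, hπ, hode⟩ := hsol
  set G : ℝ → ℝ := fun θ =>
    Real.sin θ ^ 2 * (K θ * Real.exp (2 * u θ) - 1 + u' θ ^ 2)
      + 2 * Real.sin θ * Real.cos θ * u' θ with hG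
  have hGcont : ContinuousOn G (Icc (0:ℝ) π) := by
    have cu : ContinuousOn u (Icc (0:ℝ) π) := fun θ hθ => (hu θ hθ).continuousWithinAt
    have cu' : ContinuousOn u' (Icc (0:ℝ) π) := fun θ hθ => (hu' θ hθ).continuousWithinAt
    have cK : ContinuousOn K (Icc (0:ℝ) π) := fun θ hθ => (hK θ hθ).continuousWithinAt
    fun_prop
  have hGderiv : ∀ θ ∈ Ioo (0:ℝ) π,
      HasDerivAt G (Real.sin θ ^ 2 * (K' θ * Real.exp (2 * u θ))) θ := by
    intro θ hθ
    have hmem : Icc (0:ℝ) π ∈ nhds θ := Icc_mem_nhds hθ.1 hθ.2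
    have hθI : θ ∈ Icc (0:ℝ) π := Ioo_subset_Icc_self hθ
    have hs : 0 < Real.sin θ := Real.sin_pos_of_pos_of_lt_pi hθ.1 hθ.2
    have Hu : HasDerivAt u (u' θ) θ := (hu θ hθI).hasDerivAt hmem
    have Hu' : HasDerivAt u' (u'' θ) θ := (hu' θ hθI).hasDerivAt hmem
    have HK : HasDerivAt K (K' θ) θ := (hK θ hθI).hasDerivAt hmem
    have Hs : HasDerivAt Real.sin (Real.cos θ) θ := Real.hasDerivAt_sin θ
    have Hc : HasDerivAt Real.cos (-Real.sin θ) θ := Real.hasDerivAt_cos θ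
    have He : HasDerivAt (fun t => Real.exp (2 * u t))
        (Real.exp (2 * u θ) * (2 * u' θ)) θ := (Hu.const_mul 2).exp
    have H : HasDerivAt G
        ((2 * Real.sin θ ^ 1 * Real.cos θ) * (K θ * Real.exp (2 * u θ) - 1 + u' θ ^ 2)
          + Real.sin θ ^ 2 * ((K' θ * Real.exp (2 * u θ)
              + K θ * (Real.exp (2 * u θ) * (2 * u' θ))) + 2 * u' θ ^ 1 * u'' θ)
          + ((2 * Real.cos θ * Real.cos θ + 2 * Real.sin θ * (-Real.sin θ)) * u' θ
              + 2 * Real.sin θ * Real.cos θ * u'' θ)) θ := by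
      exact ((Hs.pow 2).mul (((HK.mul He).sub_const 1).add (Hu'.pow 2))).add
        ((((Hs.const_mul 2).mul Hc).mul Hu'))
    convert H using 1
    have hodeθ := hode θ hθ
    have hclean : Real.sin θ * (K θ * Real.exp (2 * u θ))
        = Real.sin θ - Real.sin θ * u'' θ - Real.cos θ * u' θ := by
      rw [← hodeθ]; field_simp
    linear_combination (-(2 * Real.cos θ) - 2 * u' θ * Real.sin θ) * hclean
  have hanti : StrictAntiOn G (Icc (0:ℝ) π) := by
    apply strictAntiOn_of_deriv_neg (convex_Icc _ _) hGcont
    intro θ hθ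
    rw [interior_Icc] at hθ
    rw [(hGderiv θ hθ).deriv]
    have hs : 0 < Real.sin θ := Real.sin_pos_of_pos_of_lt_pi hθ.1 hθ.2
    exact mul_neg_of_pos_of_neg (pow_pos hs 2)
      (mul_neg_of_neg_of_pos (hdec θ hθ) (Real.exp_pos _))
  have h01 : G π < G 0 := hanti (left_mem_Icc.mpr pi_pos.le) (right_mem_Icc.mpr pi_pos.le) pi_pos
  have hG0 : G 0 = 0 := by simp [hG]
  have hGπ : G π = 0 := by simp [hG]
  rw [hG0, hGπ] at h01
  exact lt_irrefl _ h01


/-- **Non-existence for strictly decreasing zonal prescribers.**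
If `K : [0,π] → ℝ` is C¹ (with derivative `K'` on `[0,π]`, continuous) and
`K'(θ) < 0` for every `θ ∈ (0,π)`, then there is no zonal solution of the
Nirenberg equation with prescribed curvature `K`. In particular,
`K(θ) = 2 + cos θ` admits no zonal solution. -/
theorem no_zonal_solution_of_strictly_decreasing
    (K K' : ℝ → ℝ)
    (hK : ∀ θ ∈ Icc (0 : ℝ) π, HasDerivWithinAt K (K' θ) (Icc (0 : ℝ) π) θ)
    (hK' : ContinuousOn K' (Icc (0 : ℝ) π))
    (hdec : ∀ θ ∈ Ioo (0 : ℝ) π, K' θ < 0) :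
    (∀ u u' u'', ¬ IsZonalSolution K u u' u'') ∧
    (∀ u u' u'', ¬ IsZonalSolution (fun θ => 2 + Real.cos θ) u u' u'') := by
  refine ⟨no_zonal_aux K K' hK hdec, no_zonal_aux _ (fun θ => -Real.sin θ) ?_ ?_⟩
  · intro θ _
    exact (((Real.hasDerivAt_cos θ).const_add 2).hasDerivWithinAt)
  · intro θ hθ
    simpa using Real.sin_pos_of_pos_of_lt_pi hθ.1 hθ.2
end

section
/- Let λ ∈ ℝ and let P be a real polynomial (in one variable) satisfying the Legendre differential equation (1 − X²)·P'' − 2X·P' + λ·P = 0 as an identity of polynomials. If P evaluated at 1 is zero, then P is the zero polynomial. Equivalently, every nonzero polynomial solution P of the Legendre equation satisfies P(1) ≠ 0. -/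
open Polynomial

/-- **Polynomial solutions of the Legendre equation do not vanish at `1`.**
If a real polynomial `P` satisfies the Legendre differential equation
`(1 − X²)·P'' − 2X·P' + λ·P = 0` as a polynomial identity and `P(1) = 0`,
then `P` is the zero polynomial (equivalently, every nonzero polynomial
solution satisfies `P(1) ≠ 0`). -/
theorem legendre_polynomial_nonzero_at_one
    (lam : ℝ) (P : Polynomial ℝ)
    (hP : (1 - X ^ 2) * derivative (derivative P) - 2 * X * derivative P
        + C lam * P = 0)
    (h1 : P.eval 1 = 0) :
    P = 0 := by
  have hA : ∀ n : ℕ, (1 - X ^ 2) * derivative (derivative (derivative^[n] P))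
      - C (2 * (n + 1) : ℝ) * X * derivative (derivative^[n] P)
      + C (lam - n * (n + 1)) * derivative^[n] P = 0 := by
    intro n
    induction n with
    | zero =>
      simpa [show (C (2:ℝ)) = (2 : ℝ[X]) from map_ofNat C 2] using hP
    | succ n ih =>
      have h := congrArg derivative ih
      rw [Function.iterate_succ_apply']
      simp only [derivative_add, derivative_sub, derivative_mul, derivative_C,
        derivative_X, derivative_one, derivative_pow, derivative_zero] at h ⊢
      push_cast at h ⊢
      simp only [C_mul, C_add, C_sub, C_1, map_ofNat] at h ⊢
      linear_combination h
  have hB : ∀ n : ℕ, (derivative^[n] P).eval 1 = 0 := by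
    intro n
    induction n with
    | zero => simpa using h1
    | succ n ih =>
      have h := congrArg (eval 1) (hA n)
      rw [Function.iterate_succ_apply']
      simp only [eval_add, eval_sub, eval_mul, eval_C, eval_X, eval_one, eval_pow,
        eval_zero, ih, one_pow] at h ⊢
      have h2 : (2 * ((n : ℝ) + 1)) * (derivative (derivative^[n] P)).eval 1 = 0 := by
        linarith [h]
      have hne : (2 * ((n : ℝ) + 1)) ≠ 0 := by positivity
      exact (mul_eq_zero.mp h2).resolve_left hne
  have hT : taylor 1 P = 0 := by
    ext n
    rw [taylor_coeff]
    have h4 := congrFun (Polynomial.factorial_smul_hasseDeriv (R := ℝ) n) P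
    have h5 : ((Nat.factorial n : ℕ) : ℝ) * (hasseDeriv n P).eval 1 = 0 := by
      have := congrArg (eval 1) h4
      simpa [hB n] using this
    have hne : ((Nat.factorial n : ℕ) : ℝ) ≠ 0 := by positivity
    simpa using (mul_eq_zero.mp h5).resolve_left hne
  have h6 : taylor (1 : ℝ) P = taylor (1 : ℝ) 0 := by rw [hT, map_zero]
  exact taylor_injective 1 h6
end

section
/- (Nondegeneracy of zonal spherical harmonics.) Let ℓ ≥ 1 be a natural number and let P be a nonzero real polynomial satisfying the Legendre differential equation (1 − x²)·P''(x) − 2x·P'(x) + ℓ(ℓ+1)·P(x) = 0 for all x ∈ ℝ. Define K : [0,π] → ℝ by K(θ) = P(cos θ). Then K is non-degenerate in the sense that at every critical point θ₀ ∈ [0,π] of K (including the poles θ₀ = 0 and θ₀ = π, where K'(θ₀) = 0 automatically), one has K''(θ₀) ≠ 0. -/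
open Real Set Polynomial

/-!
With `x = cos θ` one has `K' = -sin θ · P'(x)` and `K'' = -x · P'(x) + sin² θ · P''(x)`.
At a critical point with `K'' = 0` this forces `P'(x) = 0` (at the poles because `x = ±1 ≠ 0`),
and then the equation itself gives `P(x) = 0`, as `ℓ(ℓ+1) ≠ 0`. Differentiating the Legendre
equation `n` times gives
`(1 - x²) P⁽ⁿ⁺²⁾ - 2(n+1) x P⁽ⁿ⁺¹⁾ + (λ - n(n+1)) P⁽ⁿ⁾ = 0`.
If `x² ≠ 1` this propagates `P(x) = P'(x) = 0` to all derivatives; if `x² = 1` it propagates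
`P(x) = 0` alone. Either way every derivative of `P` vanishes at `x`, so `P = 0`.
-/

namespace Polynomial

section CommRing

variable {R : Type*} [CommRing R]

noncomputable def legendreOperator (lam : R) (p : R[X]) : R[X] :=
  (1 - X ^ 2) * derivative (derivative p) - 2 * X * derivative p + C lam * p

theorem iterate_derivative_legendreOperator (lam : R) (p : R[X]) (n : ℕ) :
    derivative^[n] (legendreOperator lam p) =
      (1 - X ^ 2) * derivative^[n + 2] p - 2 * ((n : R[X]) + 1) * X * derivative^[n + 1] p
        + (C lam - (n : R[X]) * ((n : R[X]) + 1)) * derivative^[n] p := by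
  induction n with
  | zero => simp [legendreOperator]
  | succ n ih =>
    rw [Function.iterate_succ_apply', ih]
    simp only [Function.iterate_succ_apply', derivative_add, derivative_sub, derivative_mul,
      derivative_one, derivative_X_pow, derivative_X, derivative_C, derivative_natCast,
      derivative_ofNat, Nat.cast_ofNat, map_ofNat]
    push_cast
    ring

theorem eval_iterate_derivative_of_legendreOperator_eq_zero {lam : R} {p : R[X]}
    (hp : legendreOperator lam p = 0) (x : R) (n : ℕ) :
    (1 - x ^ 2) * (derivative^[n + 2] p).eval x - 2 * (n + 1) * x * (derivative^[n + 1] p).eval x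
      + (lam - n * (n + 1)) * (derivative^[n] p).eval x = 0 := by
  have h := congrArg (eval x) (iterate_derivative_legendreOperator lam p n)
  rw [hp, iterate_map_zero] at h
  simpa using h.symm

end CommRing

section CharZero

variable {R : Type*} [CommRing R] [IsDomain R] [CharZero R]

theorem eq_zero_of_forall_eval_iterate_derivative_eq_zero {p : R[X]} {x : R}
    (h : ∀ n, (derivative^[n] p).eval x = 0) : p = 0 := by
  classical
  by_contra hp
  have hlt := lt_rootMultiplicity_of_isRoot_iterate_derivative hp (n := p.natDegree) fun m _ => h m
  rw [← count_roots] at hlt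
  exact (hlt.trans_le ((Multiset.count_le_card _ _).trans (card_roots' p))).false

theorem eq_zero_of_legendreOperator_eq_zero_of_sq_ne_one {lam : R} {p : R[X]}
    (hp : legendreOperator lam p = 0) {x : R} (hx : x ^ 2 ≠ 1) (h₀ : p.eval x = 0)
    (h₁ : (derivative p).eval x = 0) : p = 0 := by
  have hx' : 1 - x ^ 2 ≠ 0 := sub_ne_zero.2 hx.symm
  have key : ∀ n, (derivative^[n] p).eval x = 0 ∧ (derivative^[n + 1] p).eval x = 0 := by
    intro n
    induction n with
    | zero => exact ⟨h₀, h₁⟩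
    | succ n ih =>
      refine ⟨ih.2, ?_⟩
      have hrec := eval_iterate_derivative_of_legendreOperator_eq_zero hp x n
      rw [ih.1, ih.2] at hrec
      exact (mul_eq_zero.1 (by simpa using hrec)).resolve_left hx'
  exact eq_zero_of_forall_eval_iterate_derivative_eq_zero fun n => (key n).1

theorem eq_zero_of_legendreOperator_eq_zero_of_sq_eq_one {lam : R} {p : R[X]}
    (hp : legendreOperator lam p = 0) {x : R} (hx : x ^ 2 = 1) (h₀ : p.eval x = 0) :
    p = 0 := by
  have hx₀ : x ≠ 0 := by rintro rfl; simp at hx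
  refine eq_zero_of_forall_eval_iterate_derivative_eq_zero (x := x) fun n => ?_
  induction n with
  | zero => exact h₀
  | succ n ih =>
    have hrec := eval_iterate_derivative_of_legendreOperator_eq_zero hp x n
    rw [hx, ih, sub_self, zero_mul, zero_sub, mul_zero, add_zero, neg_eq_zero] at hrec
    have hc : (2 * (n + 1) * x : R) ≠ 0 :=
      mul_ne_zero (mul_ne_zero two_ne_zero n.cast_add_one_ne_zero) hx₀
    exact (mul_eq_zero.1 hrec).resolve_left hc

end CharZero

end Polynomial

theorem hasDerivAt_eval_cos (p : ℝ[X]) (t : ℝ) :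
    HasDerivAt (fun t => p.eval (cos t)) (-sin t * (derivative p).eval (cos t)) t := by
  simpa [mul_comm, Function.comp_def] using (p.hasDerivAt (cos t)).comp t (hasDerivAt_cos t)

theorem deriv_eval_cos (p : ℝ[X]) :
    deriv (fun t => p.eval (cos t)) = fun t => -sin t * (derivative p).eval (cos t) :=
  funext fun t => (hasDerivAt_eval_cos p t).deriv

theorem deriv_deriv_eval_cos (p : ℝ[X]) (t : ℝ) :
    deriv (deriv fun t => p.eval (cos t)) t =
      -cos t * (derivative p).eval (cos t)
        + sin t ^ 2 * (derivative (derivative p)).eval (cos t) := by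
  rw [deriv_eval_cos]
  exact ((hasDerivAt_sin t).neg.mul (hasDerivAt_eval_cos (derivative p) t)).deriv.trans
    (by simp only [Pi.neg_apply]; ring)

/-- **Nondegeneracy of zonal spherical harmonics.** Let `ℓ ≥ 1` and let `P` be
a nonzero real polynomial satisfying the Legendre differential equation
`(1 − x²)·P''(x) − 2x·P'(x) + ℓ(ℓ+1)·P(x) = 0` for all `x ∈ ℝ`. Then
`K(θ) := P(cos θ)` is non-degenerate on `[0,π]`: at every critical point
`θ₀ ∈ [0,π]` of `K` one has `K''(θ₀) ≠ 0`. -/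
theorem zonal_spherical_harmonic_nondegenerate
    (ℓ : ℕ) (hℓ : 1 ≤ ℓ) (P : Polynomial ℝ) (hP0 : P ≠ 0)
    (hP : ∀ x : ℝ, (1 - x ^ 2) * (P.derivative.derivative.eval x)
        - 2 * x * (P.derivative.eval x) + (ℓ * (ℓ + 1) : ℝ) * P.eval x = 0) :
    ∀ θ₀ ∈ Icc (0 : ℝ) π,
      deriv (fun t : ℝ => P.eval (Real.cos t)) θ₀ = 0 →
      deriv (deriv (fun t : ℝ => P.eval (Real.cos t))) θ₀ ≠ 0 := by
  intro θ₀ _ hK' hK''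
  rw [deriv_eval_cos] at hK'
  rw [deriv_deriv_eval_cos] at hK''
  set x := cos θ₀
  have hlam : (ℓ * (ℓ + 1) : ℝ) ≠ 0 := by positivity
  have hL : legendreOperator (ℓ * (ℓ + 1) : ℝ) P = 0 :=
    Polynomial.funext fun y => by simpa [legendreOperator] using hP y
  have hsin : sin θ₀ ^ 2 = 1 - x ^ 2 := sin_sq θ₀
  have hP'x : P.derivative.eval x = 0 := by
    rcases eq_or_ne (sin θ₀) 0 with hs | hs
    · have hx : x ≠ 0 := fun hx => by simp [hs, hx] at hsin
      simpa [hs, hx] using hK''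
    · simpa [hs] using hK'
  have hPx : P.eval x = 0 := mul_left_cancel₀ hlam <| by
    linear_combination hP x - hK'' + P.derivative.derivative.eval x * hsin + x * hP'x
  by_cases hx : x ^ 2 = 1
  · exact hP0 (eq_zero_of_legendreOperator_eq_zero_of_sq_eq_one hL hx hPx)
  · exact hP0 (eq_zero_of_legendreOperator_eq_zero_of_sq_ne_one hL hx hPx hP'x)
end
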